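/- arXiv:1612.01313 — 4 statements merged into one kernel-verified Lean document; each statement's English description precedes it below -/
import Mathlib

section
/- Let λ > 0, η > 0, and for each y ∈ ℕ define W(y|x) = (e^{-x/λ}/(1+λ)) (λ/(1+λ))^y ∑_{j=0}^∞ (x/(λ(1+λ)))^j (y+j)!/((j!)^2 y!). If the input X has exponential density Q_E(x) = (1/η) e^{-x/η} on [0,∞), then the output distribution R_G(y) = ∫_0^∞ W(y|x) Q_E(x) dx equals the geometric (Bose–Einstein) distribution R_G(y) = (1/(1+λ+η)) ((η+λ)/(1+λ+η))^y. -/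
/-!
Since `(y + j)! / (j!² y!) = C(j + y, y) / j!`, the integrand `W(y|x) Q_E(x)` is a power series in `x`
times `exp (-(c x))` with `c = 1/λ + 1/η`. Integrating termwise with `∫₀^∞ xʲ e^{-cx} dx = j! / c^{j+1}`
cancels the `j!` and leaves the negative binomial series `∑ C(j + y, y) aʲ / c^{j+1} = cʸ / (c - a)^{y+1}`
with `a = 1/(λ(1+λ)) < c`, which simplifies to the geometric law.
-/

open Real MeasureTheory

/-- The Laguerre channel transition pmf `W(y|x)` with noise parameter `lam`. -/
noncomputable def laguerreW (lam x : ℝ) (y : ℕ) : ℝ :=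
  Real.exp (-x / lam) / (1 + lam) * (lam / (1 + lam)) ^ y *
    ∑' j : ℕ, (x / (lam * (1 + lam))) ^ j *
      ((y + j).factorial : ℝ) / ((j.factorial : ℝ) ^ 2 * (y.factorial : ℝ))

open Set

lemma integrableOn_pow_mul_exp_neg_mul_Ioi {c : ℝ} (hc : 0 < c) (j : ℕ) :
    IntegrableOn (fun x : ℝ => x ^ j * exp (-(c * x))) (Ioi 0) := by
  refine (integrableOn_rpow_mul_exp_neg_mul_rpow (s := j) (p := 1)
    (neg_one_lt_zero.trans_le j.cast_nonneg) one_pos hc).congr_fun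
    (fun x _ => ?_) measurableSet_Ioi
  simp only [rpow_one, rpow_natCast, neg_mul]

lemma integral_pow_mul_exp_neg_mul_Ioi {c : ℝ} (hc : 0 < c) (j : ℕ) :
    ∫ x in Ioi (0 : ℝ), x ^ j * exp (-(c * x)) = j.factorial / c ^ (j + 1) := by
  have h := integral_rpow_mul_exp_neg_mul_Ioi (a := j + 1) (by positivity) hc
  rw [add_sub_cancel_right, Gamma_nat_eq_factorial, ← Nat.cast_succ, rpow_natCast] at h
  convert h using 1
  · simp_rw [rpow_natCast]
  · rw [one_div_pow, Nat.succ_eq_add_one, one_div_mul_eq_div]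

lemma integral_tsum_mul_exp_neg_mul_Ioi {b : ℕ → ℝ} {c : ℝ} (hc : 0 < c)
    (hb : Summable fun j => |b j| * j.factorial / c ^ (j + 1)) :
    ∫ x in Ioi (0 : ℝ), (∑' j, b j * x ^ j) * exp (-(c * x)) =
      ∑' j, b j * j.factorial / c ^ (j + 1) := by
  have hint : ∀ j, Integrable (fun x => b j * (x ^ j * exp (-(c * x)))) (volume.restrict (Ioi 0)) :=
    fun j => (integrableOn_pow_mul_exp_neg_mul_Ioi hc j).const_mul _
  have hnorm : ∀ j, ∫ x in Ioi (0 : ℝ), ‖b j * (x ^ j * exp (-(c * x)))‖ =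
      |b j| * j.factorial / c ^ (j + 1) := by
    intro j
    rw [mul_div_assoc, ← integral_pow_mul_exp_neg_mul_Ioi hc j, ← integral_const_mul]
    refine setIntegral_congr_fun measurableSet_Ioi fun x (hx : 0 < x) => ?_
    rw [norm_mul, Real.norm_eq_abs, Real.norm_of_nonneg (by positivity)]
  simp_rw [← tsum_mul_right, mul_assoc]
  rw [← integral_tsum_of_summable_integral_norm hint (by simpa only [hnorm] using hb)]
  simp_rw [integral_const_mul, integral_pow_mul_exp_neg_mul_Ioi hc, mul_div_assoc]

lemma hasSum_choose_mul_pow_div_pow_succ {a c : ℝ} (ha : 0 ≤ a) (hac : a < c) (k : ℕ) :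
    HasSum (fun n => (n + k).choose k * a ^ n / c ^ (n + 1)) (c ^ k / (c - a) ^ (k + 1)) := by
  have hc : 0 < c := ha.trans_lt hac
  have hr : ‖a / c‖ < 1 := by
    rw [Real.norm_of_nonneg (by positivity), div_lt_one hc]; exact hac
  have hterm : (fun n => (n + k).choose k * a ^ n / c ^ (n + 1)) =
      fun n => (n + k).choose k * (a / c) ^ n / c := funext fun n => by
    rw [div_pow, pow_succ]; field_simp
  have hvalue : c ^ k / (c - a) ^ (k + 1) = 1 / (1 - a / c) ^ (k + 1) / c := by
    rw [one_sub_div hc.ne', div_pow]; field_simp; ring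
  rw [hterm, hvalue]
  exact (hasSum_choose_mul_geometric_of_norm_lt_one k hr).div_const c

lemma integral_choose_series_mul_exp_neg_mul_Ioi {a c : ℝ} (ha : 0 ≤ a) (hac : a < c) (y : ℕ) :
    ∫ x in Ioi (0 : ℝ), (∑' j, ((j + y).choose y / j.factorial * a ^ j) * x ^ j) *
        exp (-(c * x)) = c ^ y / (c - a) ^ (y + 1) := by
  have hterm : ∀ j : ℕ, (j + y).choose y / j.factorial * a ^ j * j.factorial / c ^ (j + 1) =
      (j + y).choose y * a ^ j / c ^ (j + 1) := fun j => by
    field_simp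
  have hsum := hasSum_choose_mul_pow_div_pow_succ ha hac y
  rw [integral_tsum_mul_exp_neg_mul_Ioi (ha.trans_lt hac), tsum_congr hterm, hsum.tsum_eq]
  refine hsum.summable.congr fun j => ?_
  rw [abs_of_nonneg (by positivity), hterm]

lemma factorial_add_div_factorial_sq_mul_factorial (y j : ℕ) :
    ((y + j).factorial : ℝ) / ((j.factorial : ℝ) ^ 2 * y.factorial) =
      (j + y).choose y / j.factorial := by
  rw [add_comm y j, ← Nat.add_choose_mul_factorial_mul_factorial]
  push_cast
  field_simp

lemma laguerreW_mul_exp (lam η x : ℝ) (y : ℕ) :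
    laguerreW lam x y * ((1 / η) * exp (-x / η)) =
      (lam / (1 + lam)) ^ y / (1 + lam) / η *
        ((∑' j, ((j + y).choose y / j.factorial * (lam * (1 + lam))⁻¹ ^ j) * x ^ j) *
          exp (-((lam⁻¹ + η⁻¹) * x))) := by
  have hexp : exp (-x / lam) * exp (-x / η) = exp (-((lam⁻¹ + η⁻¹) * x)) := by
    rw [← exp_add]; ring_nf
  have hseries : ∀ j : ℕ, (x / (lam * (1 + lam))) ^ j * ((y + j).factorial : ℝ) /
      ((j.factorial : ℝ) ^ 2 * y.factorial) =
      (j + y).choose y / j.factorial * (lam * (1 + lam))⁻¹ ^ j * x ^ j := fun j => by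
    rw [mul_div_assoc, factorial_add_div_factorial_sq_mul_factorial, div_eq_mul_inv x, mul_pow]
    ring
  rw [laguerreW, tsum_congr hseries, ← hexp]
  generalize ∑' j : ℕ, ((j + y).choose y / j.factorial * (lam * (1 + lam))⁻¹ ^ j) * x ^ j = S
  ring

theorem laguerre_exponential_input_gives_geometric_output
    (lam η : ℝ) (hlam : 0 < lam) (hη : 0 < η) (y : ℕ) :
    ∫ x in Set.Ioi (0:ℝ), laguerreW lam x y * ((1 / η) * Real.exp (-x / η)) =
      (1 / (1 + lam + η)) * ((η + lam) / (1 + lam + η)) ^ y := by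
  have hac : (lam * (1 + lam))⁻¹ < lam⁻¹ + η⁻¹ := by
    have hlt : (lam * (1 + lam))⁻¹ < lam⁻¹ := inv_strictAnti₀ hlam (by nlinarith)
    linarith [inv_pos.2 hη]
  simp_rw [laguerreW_mul_exp]
  rw [integral_const_mul, integral_choose_series_mul_exp_neg_mul_Ioi (by positivity) hac]
  have hgap : lam⁻¹ + η⁻¹ - (lam * (1 + lam))⁻¹ = (1 + lam + η) / ((1 + lam) * η) := by
    field_simp; ring
  have hratio : lam / (1 + lam) * (lam⁻¹ + η⁻¹) / ((1 + lam + η) / ((1 + lam) * η)) =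
      (η + lam) / (1 + lam + η) := by
    field_simp
  have hscale : (1 + lam)⁻¹ * η⁻¹ * ((1 + lam + η) / ((1 + lam) * η))⁻¹ = 1 / (1 + lam + η) := by
    field_simp
  rw [hgap, ← hscale, ← hratio]
  -- `ring` treats a power of a sum as an atom, so the sums are abstracted first
  generalize (1 + lam + η) / ((1 + lam) * η) = g
  generalize lam⁻¹ + η⁻¹ = c
  ring
end

section
/- Let Ψ_Poisson(z) = e^{μ(z−1)} be the PGF of a Poisson(μ) random variable, Ψ_{v1}(z) = (z + λ(1−z))/(1 + λ(1−z)) and Ψ_{v2}(z) = 1/(1 + λ(1−z)). Then the PGF of the Laguerre distribution with signal parameter μ and noise parameter λ satisfies Ψ_Laguerre(z) = Ψ_Poisson(Ψ_{v1}(z)) · Ψ_{v2}(z). -/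
/-!
Put `x = λz/(1+λ)` and `a = μ/(λ(1+λ))`. Then `P(k) z^k` is `e^{-μ/λ}/(1+λ)` times
`∑_j C(k+j, j) x^k a^j / j!`. Summing over `k` first, the negative binomial series gives
`∑_k C(k+j, j) x^k = (1-x)^{-(j+1)}`, and then the exponential series gives
`∑_j (a/(1-x))^j / j! / (1-x) = e^{a/(1-x)} / (1-x)`. Since `|x| < 1`, the same computation with
`|x|, |a|` shows that the double series converges absolutely, so the order of summation may be
swapped. Finally `1 - x = (1 + λ(1-z))/(1+λ)`, and the two exponents combine to `μ(Ψ_{v1}(z) - 1)`.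
-/

open Real

/-- The Laguerre pmf with signal parameter `μ` and noise parameter `lam`. -/
noncomputable def laguerrePMF (μ lam : ℝ) (k : ℕ) : ℝ :=
  Real.exp (-μ / lam) / (1 + lam) * (lam / (1 + lam)) ^ k *
    ∑' j : ℕ, (μ / (lam * (1 + lam))) ^ j *
      ((k + j).factorial : ℝ) / ((j.factorial : ℝ) ^ 2 * (k.factorial : ℝ))

open Nat

theorem factorial_add_div_sq_mul_factorial {K : Type*} [Field K] [CharZero K] (k j : ℕ) :
    ((k + j)! : K) / ((j ! : K) ^ 2 * k !) = (k + j).choose j / j ! := by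
  rw [Nat.cast_choose K (Nat.le_add_left j k), Nat.add_sub_cancel]
  field_simp

section LaguerreSeries

variable {x : ℝ} (a : ℝ)

theorem hasSum_choose_mul_pow_mul_pow_div_factorial (hx : |x| < 1) (j : ℕ) :
    HasSum (fun k : ℕ => (k + j).choose j * x ^ k * (a ^ j / j !))
      ((a / (1 - x)) ^ j / j ! / (1 - x)) := by
  have hsum := (hasSum_choose_mul_geometric_of_norm_lt_one j (r := x) hx).mul_right (a ^ j / j !)
  have hvalue (y : ℝ) : 1 / y ^ (j + 1) * (a ^ j / j !) = (a / y) ^ j / j ! / y := by ring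
  rwa [hvalue] at hsum

theorem summable_uncurry_choose_mul_pow_mul_pow_div_factorial (hx : |x| < 1) :
    Summable (Function.uncurry fun k j : ℕ => (k + j).choose j * x ^ k * (a ^ j / j !)) := by
  have hx' : |(|x|)| < 1 := by rwa [abs_abs]
  have hmajorant : Summable fun p : ℕ × ℕ =>
      ((p.2 + p.1).choose p.1 : ℝ) * |x| ^ p.2 * (|a| ^ p.1 / p.1 !) := by
    rw [summable_prod_of_nonneg (fun p => by positivity)]
    refine ⟨fun j => (hasSum_choose_mul_pow_mul_pow_div_factorial |a| hx' j).summable, ?_⟩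
    simp_rw [(hasSum_choose_mul_pow_mul_pow_div_factorial |a| hx' _).tsum_eq]
    exact (Real.summable_pow_div_factorial _).div_const _
  refine Summable.of_norm_bounded hmajorant.prod_symm fun p => le_of_eq ?_
  obtain ⟨k, j⟩ := p
  simp only [Function.uncurry_apply_pair, Real.norm_eq_abs, abs_mul, abs_div, abs_pow,
    Nat.abs_cast, Prod.swap_prod_mk]

theorem tsum_tsum_choose_mul_pow_mul_pow_div_factorial (hx : |x| < 1) :
    ∑' (k : ℕ) (j : ℕ), (k + j).choose j * x ^ k * (a ^ j / j !) =
      exp (a / (1 - x)) / (1 - x) := by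
  rw [← (summable_uncurry_choose_mul_pow_mul_pow_div_factorial a hx).tsum_comm]
  simp_rw [(hasSum_choose_mul_pow_mul_pow_div_factorial a hx _).tsum_eq]
  rw [tsum_div_const, exp_eq_exp_ℝ, (NormedSpace.expSeries_div_hasSum_exp _).tsum_eq]

end LaguerreSeries

theorem laguerrePMF_mul_pow (μ lam z : ℝ) (k : ℕ) :
    laguerrePMF μ lam k * z ^ k = exp (-μ / lam) / (1 + lam) *
      ∑' j : ℕ, (k + j).choose j * (lam * z / (1 + lam)) ^ k *
        ((μ / (lam * (1 + lam))) ^ j / j !) := by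
  rw [laguerrePMF, ← tsum_mul_left, ← tsum_mul_right, ← tsum_mul_left]
  refine tsum_congr fun j => ?_
  rw [mul_div_assoc, factorial_add_div_sq_mul_factorial]
  ring

theorem laguerre_pgf_decomposition_general (μ lam : ℝ) (hlam : 0 < lam)
    (z : ℝ) (hz : |z| ≤ 1) :
    (∑' k : ℕ, laguerrePMF μ lam k * z ^ k) =
      Real.exp (μ * ((z + lam * (1 - z)) / (1 + lam * (1 - z)) - 1)) *
        (1 / (1 + lam * (1 - z))) := by
  have hlam1 : 0 < 1 + lam := by linarith
  have hD : 0 < 1 + lam * (1 - z) := by nlinarith [(abs_le.1 hz).2]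
  have hx : |lam * z / (1 + lam)| < 1 := by
    rw [abs_div, abs_mul, abs_of_pos hlam, abs_of_pos hlam1, div_lt_one hlam1]
    nlinarith [abs_nonneg z]
  have h1x : 1 - lam * z / (1 + lam) = (1 + lam * (1 - z)) / (1 + lam) := by
    field_simp
    ring
  simp_rw [laguerrePMF_mul_pow, tsum_mul_left, tsum_tsum_choose_mul_pow_mul_pow_div_factorial _ hx,
    h1x]
  calc exp (-μ / lam) / (1 + lam) *
        (exp (μ / (lam * (1 + lam)) / ((1 + lam * (1 - z)) / (1 + lam))) /
          ((1 + lam * (1 - z)) / (1 + lam)))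
      = exp (-μ / lam + μ / (lam * (1 + lam * (1 - z)))) * (1 / (1 + lam * (1 - z))) := by
        rw [exp_add]
        field_simp
    _ = _ := by
        congr 2
        field_simp
        ring

theorem laguerre_pgf_decomposition (μ lam : ℝ) (hμ : 0 ≤ μ) (hlam : 0 < lam)
    (z : ℝ) (hz : |z| ≤ 1) :
    (∑' k : ℕ, laguerrePMF μ lam k * z ^ k) =
      Real.exp (μ * ((z + lam * (1 - z)) / (1 + lam * (1 - z)) - 1)) *
        (1 / (1 + lam * (1 - z))) :=
  laguerre_pgf_decomposition_general μ lam hlam z hz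
end

section
/- The two representations of the Laguerre pmf agree: for all x ≥ 0, λ > 0, and k ∈ ℕ, (e^{-x/λ}/(1+λ)) (λ/(1+λ))^k ∑_{j=0}^∞ (x/(λ(1+λ)))^j (k+j)!/((j!)^2 k!) = (e^{-x/(1+λ)}/(1+λ)) (λ/(1+λ))^k ∑_{j=0}^k (x/(λ(1+λ)))^j k!/((j!)^2 (k−j)!). -/
open Finset

private lemma vand (k j : ℕ) :
    (k + j).choose j = ∑ i ∈ Finset.range (k + 1), k.choose i * j.choose i := by
  have hsym : (k + j).choose j = (k + j).choose k := by
    rw [← Nat.choose_symm (Nat.le_add_right k j)]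
    congr 1
    omega
  rw [hsym, Nat.add_choose_eq, Finset.Nat.sum_antidiagonal_eq_sum_range_succ_mk]
  rw [← Finset.sum_range_reflect]
  refine Finset.sum_congr rfl fun i hi => ?_
  simp only [Finset.mem_range] at hi
  have h1 : k.succ - 1 - i = k - i := by omega
  have h2 : k - (k - i) = i := by omega
  simp only [h1, h2]
  rw [Nat.choose_symm (by omega)]

private lemma hasSum_choose_exp (y : ℝ) (i : ℕ) :
    HasSum (fun j : ℕ => (j.choose i : ℝ) * y ^ j / j.factorial)
      (y ^ i / i.factorial * Real.exp y) := by
  have h0 : HasSum (fun n : ℕ => y ^ n / n.factorial) (Real.exp y) := by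
    rw [Real.exp_eq_exp_ℝ]
    simpa [div_eq_inv_mul, smul_eq_mul] using NormedSpace.exp_series_hasSum_exp' (𝕂 := ℝ) y
  have h1 : HasSum (fun n : ℕ => y ^ i / i.factorial * (y ^ n / n.factorial))
      (y ^ i / i.factorial * Real.exp y) := h0.mul_left _
  rw [← (hasSum_nat_add_iff' (f := fun j : ℕ => (j.choose i : ℝ) * y ^ j / j.factorial) i)]
  have hzero : ∑ j ∈ Finset.range i, (j.choose i : ℝ) * y ^ j / j.factorial = 0 := by
    refine Finset.sum_eq_zero fun j hj => ?_
    simp only [Finset.mem_range] at hj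
    rw [Nat.choose_eq_zero_of_lt hj]
    simp
  rw [hzero, sub_zero]
  convert h1 using 3 with n
  · rfl
  have hc : ((n + i).choose i : ℝ) = ((n + i).factorial : ℝ) / (i.factorial * n.factorial) := by
    rw [eq_div_iff (by positivity)]
    have := Nat.choose_mul_factorial_mul_factorial (Nat.le_add_left i n)
    have hni : n + i - i = n := by omega
    rw [hni] at this
    push_cast [← this]; ring
  rw [hc, pow_add]
  have hi : (i.factorial : ℝ) ≠ 0 := by positivity
  have hn : (n.factorial : ℝ) ≠ 0 := by positivity
  have hni : ((n + i).factorial : ℝ) ≠ 0 := by positivity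
  field_simp

private lemma key (y : ℝ) (k : ℕ) :
    (∑' j : ℕ, y ^ j * ((k + j).factorial : ℝ) / ((j.factorial : ℝ) ^ 2 * (k.factorial : ℝ))) =
    Real.exp y * ∑ i ∈ Finset.range (k + 1),
      y ^ i * (k.factorial : ℝ) / ((i.factorial : ℝ) ^ 2 * ((k - i).factorial : ℝ)) := by
  have hterm : ∀ j : ℕ,
      y ^ j * ((k + j).factorial : ℝ) / ((j.factorial : ℝ) ^ 2 * (k.factorial : ℝ)) =
      ∑ i ∈ Finset.range (k + 1), (k.choose i : ℝ) * ((j.choose i : ℝ) * y ^ j / j.factorial) := by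
    intro j
    have hkj : ((k + j).factorial : ℝ) =
        ((k + j).choose j : ℝ) * j.factorial * k.factorial := by
      have := Nat.choose_mul_factorial_mul_factorial (Nat.le_add_left j k)
      have h2 : k + j - j = k := by omega
      rw [h2] at this
      push_cast [← this]; ring
    have hvand : ((k + j).choose j : ℝ) = ∑ i ∈ Finset.range (k + 1),
        (k.choose i : ℝ) * (j.choose i : ℝ) := by exact_mod_cast congrArg (Nat.cast (R := ℝ)) (vand k j)
    rw [hkj, hvand]
    simp only [Finset.sum_mul, Finset.mul_sum, Finset.sum_div]
    refine Finset.sum_congr rfl fun i _ => ?_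
    have hj : (j.factorial : ℝ) ≠ 0 := by positivity
    have hk : (k.factorial : ℝ) ≠ 0 := by positivity
    field_simp
  calc (∑' j : ℕ, y ^ j * ((k + j).factorial : ℝ) / ((j.factorial : ℝ) ^ 2 * (k.factorial : ℝ)))
      = ∑' j : ℕ, ∑ i ∈ Finset.range (k + 1),
          (k.choose i : ℝ) * ((j.choose i : ℝ) * y ^ j / j.factorial) := by
        exact tsum_congr hterm
    _ = ∑ i ∈ Finset.range (k + 1), ∑' j : ℕ,
          (k.choose i : ℝ) * ((j.choose i : ℝ) * y ^ j / j.factorial) := by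
        refine Summable.tsum_finsetSum fun i _ => ?_
        exact ((hasSum_choose_exp y i).mul_left _).summable
    _ = ∑ i ∈ Finset.range (k + 1),
          (k.choose i : ℝ) * (y ^ i / i.factorial * Real.exp y) := by
        refine Finset.sum_congr rfl fun i _ => ?_
        exact ((hasSum_choose_exp y i).mul_left _).tsum_eq
    _ = Real.exp y * ∑ i ∈ Finset.range (k + 1),
          y ^ i * (k.factorial : ℝ) / ((i.factorial : ℝ) ^ 2 * ((k - i).factorial : ℝ)) := by
        rw [Finset.mul_sum]
        refine Finset.sum_congr rfl fun i hi => ?_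
        simp only [Finset.mem_range] at hi
        have hle : i ≤ k := by omega
        have hchoose : (k.choose i : ℝ) * i.factorial * (k - i).factorial = k.factorial := by
          exact_mod_cast congrArg (Nat.cast (R := ℝ))
            (Nat.choose_mul_factorial_mul_factorial hle)
        have hi' : (i.factorial : ℝ) ≠ 0 := by positivity
        have hki : ((k - i).factorial : ℝ) ≠ 0 := by positivity
        rw [← hchoose]
        field_simp

theorem laguerre_pmf_two_representations (x lam : ℝ) (hx : 0 ≤ x) (hlam : 0 < lam) (k : ℕ) :
    Real.exp (-x / lam) / (1 + lam) * (lam / (1 + lam)) ^ k *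
      (∑' j : ℕ, (x / (lam * (1 + lam))) ^ j *
        ((k + j).factorial : ℝ) / ((j.factorial : ℝ) ^ 2 * (k.factorial : ℝ))) =
    Real.exp (-x / (1 + lam)) / (1 + lam) * (lam / (1 + lam)) ^ k *
      (∑ j ∈ Finset.range (k + 1), (x / (lam * (1 + lam))) ^ j *
        (k.factorial : ℝ) / ((j.factorial : ℝ) ^ 2 * ((k - j).factorial : ℝ))) := by
  rw [key (x / (lam * (1 + lam))) k]
  have h1 : (0:ℝ) < 1 + lam := by linarith
  have hexp : Real.exp (-x / lam) * Real.exp (x / (lam * (1 + lam))) =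
      Real.exp (-x / (1 + lam)) := by
    rw [← Real.exp_add]
    congr 1
    field_simp
    ring
  rw [← hexp]
  ring
end

section
/- For any probability density q supported on [0, A] (with no average power constraint), h(q) − (1/2)∫ q(x) log x dx ≤ h(q*) − (1/2)∫ q*(x) log x dx, where q*(x) = 1/√(4Ax) and h(q) = −∫ q log q is the differential entropy; that is, q* maximizes the functional h(q) − (1/2)∫ q(x) log x dx among all such densities. -/
open Real MeasureTheory

theorem maxentropic_density_on_interval (A : ℝ) (hA : 0 < A) (q : ℝ → ℝ)
    (hq0 : ∀ x, 0 ≤ q x)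
    (hq1 : ∫ x in Set.Ioc (0:ℝ) A, q x = 1)
    (hfin1 : IntegrableOn (fun x => q x * Real.log (q x)) (Set.Ioc (0:ℝ) A))
    (hfin2 : IntegrableOn (fun x => q x * Real.log x) (Set.Ioc (0:ℝ) A)) :
    -(∫ x in Set.Ioc (0:ℝ) A, q x * Real.log (q x)) -
        (1 / 2) * ∫ x in Set.Ioc (0:ℝ) A, q x * Real.log x ≤
      -(∫ x in Set.Ioc (0:ℝ) A, (1 / Real.sqrt (4 * A * x)) *
            Real.log (1 / Real.sqrt (4 * A * x))) -
        (1 / 2) * ∫ x in Set.Ioc (0:ℝ) A, (1 / Real.sqrt (4 * A * x)) * Real.log x := by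
  have hA4 : (0:ℝ) < 4 * A := by linarith
  set s : Set ℝ := Set.Ioc (0:ℝ) A with hs
  set c : ℝ := (1/2) * Real.log (4*A) with hc
  set p : ℝ → ℝ := fun x => 1 / Real.sqrt (4 * A * x) with hp
  set B : ℝ := Real.sqrt (4*A) with hB
  have hBpos : 0 < B := Real.sqrt_pos.mpr hA4
  -- p x = B⁻¹ * x ^ (-1/2) on s
  have hpeq : Set.EqOn p (fun x => B⁻¹ * x ^ (-(1/2) : ℝ)) s := by
    intro x hx
    have hx0 : 0 < x := hx.1
    have hsq : Real.sqrt (4*A*x) = B * Real.sqrt x := Real.sqrt_mul hA4.le x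
    simp only [hp, hsq, one_div, mul_inv]
    congr 1
    rw [Real.rpow_neg hx0.le]
    congr 1
    rw [Real.sqrt_eq_rpow]
    norm_num
  -- measurability of rpow
  have hmeas_rpow : ∀ r : ℝ, Measurable (fun x : ℝ => x ^ r) := by
    intro r
    refine measurable_of_continuousOn_compl_singleton (0 : ℝ) ?_
    exact continuousOn_of_forall_continuousAt fun x hx =>
      Real.continuousAt_rpow_const x r (Or.inl hx)
  -- integrability of powers
  have hrint : ∀ r : ℝ, -1 < r → IntegrableOn (fun x : ℝ => x ^ r) s := by
    intro r hr
    rw [hs, ← intervalIntegrable_iff_integrableOn_Ioc_of_le hA.le]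
    exact intervalIntegral.intervalIntegrable_rpow' hr
  have hint_half := hrint (-(1/2)) (by norm_num)
  -- integral of x^(-1/2)
  have hintval : (∫ x in s, x ^ (-(1/2) : ℝ)) = 2 * Real.sqrt A := by
    rw [hs, ← intervalIntegral.integral_of_le hA.le,
      integral_rpow (Or.inl (by norm_num))]
    rw [Real.zero_rpow (by norm_num), Real.sqrt_eq_rpow]
    norm_num
    ring
  have hB2 : B = 2 * Real.sqrt A := by
    rw [hB, show (4:ℝ)*A = 2^2 * A by ring, Real.sqrt_mul (by positivity) A,
      Real.sqrt_sq (by norm_num)]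
  have hsA : 0 < Real.sqrt A := Real.sqrt_pos.mpr hA
  -- p integrable with integral 1
  have hpint : IntegrableOn p s := by
    have h0 : IntegrableOn (fun x => B⁻¹ * x ^ (-(1/2) : ℝ)) s := hint_half.const_mul B⁻¹
    exact h0.congr_fun hpeq.symm measurableSet_Ioc
  have hpint1 : (∫ x in s, p x) = 1 := by
    rw [setIntegral_congr_fun measurableSet_Ioc hpeq, integral_const_mul, hintval, hB2]
    field_simp
  -- integrability of x^(-1/2) * log x on s
  have hkey_int : IntegrableOn (fun x : ℝ => x ^ (-(1/2):ℝ) * Real.log x) s := by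
    have hmeas : AEStronglyMeasurable (fun x : ℝ => x ^ (-(1/2):ℝ) * Real.log x)
        (volume.restrict s) :=
      ((hmeas_rpow _).mul Real.measurable_log).aestronglyMeasurable
    refine Integrable.mono'
      (g := fun x => 4 * x ^ (-(3/4):ℝ) + |Real.log A| * x ^ (-(1/2):ℝ)) ?_ hmeas ?_
    · exact ((hrint (-(3/4)) (by norm_num)).const_mul 4).add
        ((hrint (-(1/2)) (by norm_num)).const_mul _)
    · rw [ae_restrict_iff' measurableSet_Ioc]
      filter_upwards with x hx
      have hx0 : 0 < x := hx.1
      have hpow0 : (0:ℝ) ≤ x ^ (-(1/2):ℝ) := Real.rpow_nonneg hx0.le _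
      have hlogbound : |Real.log x| ≤ 4 * x ^ (-(1/4):ℝ) + |Real.log A| := by
        rcases le_or_gt x 1 with h1 | h1
        · have hneg : Real.log x ≤ 0 := Real.log_nonpos hx0.le h1
          rw [abs_of_nonpos hneg]
          have : Real.log x⁻¹ ≤ (x⁻¹) ^ ((1:ℝ)/4) / (1/4) :=
            Real.log_le_rpow_div (by positivity) (by norm_num)
          rw [Real.log_inv, Real.inv_rpow hx0.le, ← Real.rpow_neg hx0.le] at this
          have h4 : (x ^ (-((1:ℝ)/4))) / (1/4) = 4 * x ^ (-(1/4):ℝ) := by ring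
          rw [h4] at this
          nlinarith [abs_nonneg (Real.log A)]
        · have hpos : 0 ≤ Real.log x := Real.log_nonneg h1.le
          rw [abs_of_nonneg hpos]
          have hxA : Real.log x ≤ Real.log A := Real.log_le_log hx0 hx.2
          have : Real.log A ≤ |Real.log A| := le_abs_self _
          have h4 : (0:ℝ) ≤ 4 * x ^ (-(1/4):ℝ) := by positivity
          linarith
      have hnorm : ‖x ^ (-(1/2):ℝ) * Real.log x‖ = x ^ (-(1/2):ℝ) * |Real.log x| := by
        rw [norm_mul, Real.norm_eq_abs, Real.norm_eq_abs, abs_of_nonneg hpow0]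
      rw [hnorm]
      have hmul : x ^ (-(1/2):ℝ) * |Real.log x| ≤
          x ^ (-(1/2):ℝ) * (4 * x ^ (-(1/4):ℝ) + |Real.log A|) :=
        mul_le_mul_of_nonneg_left hlogbound hpow0
      have hcomb : x ^ (-(1/2):ℝ) * x ^ (-(1/4):ℝ) = x ^ (-(3/4):ℝ) := by
        rw [← Real.rpow_add hx0]; norm_num
      calc x ^ (-(1/2):ℝ) * |Real.log x|
          ≤ x ^ (-(1/2):ℝ) * (4 * x ^ (-(1/4):ℝ) + |Real.log A|) := hmul
        _ = 4 * (x ^ (-(1/2):ℝ) * x ^ (-(1/4):ℝ)) + |Real.log A| * x ^ (-(1/2):ℝ) := by ring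
        _ = 4 * x ^ (-(3/4):ℝ) + |Real.log A| * x ^ (-(1/2):ℝ) := by rw [hcomb]
  -- integrability of p * log x
  have hplog_int : IntegrableOn (fun x => p x * Real.log x) s := by
    have h0 : IntegrableOn (fun x => B⁻¹ * (x ^ (-(1/2):ℝ) * Real.log x)) s :=
      hkey_int.const_mul B⁻¹
    refine h0.congr_fun (fun x hx => ?_) measurableSet_Ioc
    show B⁻¹ * (x ^ (-(1/2):ℝ) * Real.log x) = p x * Real.log x
    rw [hpeq hx]; ring
  -- q integrable
  have hqint : IntegrableOn q s := by
    by_contra h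
    rw [integral_undef h] at hq1
    norm_num at hq1
  -- log p x = -c - (1/2) log x on s
  have hlogp : ∀ x ∈ s, Real.log (p x) = -c - (1/2) * Real.log x := by
    intro x hx
    have hx0 : 0 < x := hx.1
    have h4x : 0 < 4*A*x := by positivity
    rw [hp]
    simp only [one_div, Real.log_inv]
    rw [Real.log_sqrt h4x.le, Real.log_mul hA4.ne' hx0.ne']
    ring
  -- pointwise inequality
  have hptwise : ∀ x ∈ s,
      -(q x * Real.log (q x)) - (1/2) * (q x * Real.log x) ≤ p x - q x + c * q x := by
    intro x hx
    have hx0 : 0 < x := hx.1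
    have hppos : 0 < p x := by rw [hp]; positivity
    rcases eq_or_lt_of_le (hq0 x) with h0 | hqpos
    · rw [← h0]
      simp
      positivity
    · have key : Real.log (p x / q x) ≤ p x / q x - 1 :=
        Real.log_le_sub_one_of_pos (div_pos hppos hqpos)
      have h1 : q x * Real.log (p x / q x) ≤ q x * (p x / q x - 1) :=
        mul_le_mul_of_nonneg_left key (hq0 x)
      have h2 : q x * (p x / q x - 1) = p x - q x := by field_simp
      rw [h2, Real.log_div hppos.ne' hqpos.ne', hlogp x hx] at h1
      nlinarith [h1]
  -- RHS integrand equality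
  have hrhs_eq : Set.EqOn (fun x => p x * Real.log (p x))
      (fun x => -c * p x - (1/2) * (p x * Real.log x)) s := by
    intro x hx
    simp only [hlogp x hx]
    ring
  -- compute ∫ p log p
  have hI1 : (∫ x in s, p x * Real.log (p x)) =
      -c - (1/2) * ∫ x in s, p x * Real.log x := by
    rw [setIntegral_congr_fun measurableSet_Ioc hrhs_eq,
      integral_sub ((hpint.const_mul _)) ((hplog_int.const_mul _)),
      integral_const_mul, integral_const_mul, hpint1]
    ring
  -- LHS rewrite
  have hlhs : -(∫ x in s, q x * Real.log (q x)) - (1/2) * ∫ x in s, q x * Real.log x =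
      ∫ x in s, (-(q x * Real.log (q x)) - (1/2) * (q x * Real.log x)) := by
    have hneg : IntegrableOn (fun x => -(q x * Real.log (q x))) s := hfin1.neg
    have hhalf : IntegrableOn (fun x => (1/2) * (q x * Real.log x)) s := hfin2.const_mul _
    rw [integral_sub hneg hhalf, integral_neg, integral_const_mul]
  -- upper bound integral
  have hub_int : IntegrableOn (fun x => p x - q x + c * q x) s :=
    (hpint.sub hqint).add (hqint.const_mul c)
  have hub_val : (∫ x in s, (p x - q x + c * q x)) = c := by
    have i1 : IntegrableOn (fun x => p x - q x) s := hpint.sub hqint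
    have i2 : IntegrableOn (fun x => c * q x) s := hqint.const_mul c
    rw [integral_add i1 i2, integral_sub hpint hqint, integral_const_mul, hpint1, hq1]
    ring
  have hle : -(∫ x in s, q x * Real.log (q x)) - (1/2) * ∫ x in s, q x * Real.log x ≤ c := by
    rw [hlhs, ← hub_val]
    exact setIntegral_mono_on (hfin1.neg.sub (hfin2.const_mul _)) hub_int
      measurableSet_Ioc hptwise
  have hrhs : -(∫ x in s, p x * Real.log (p x)) - (1/2) * ∫ x in s, p x * Real.log x = c := by
    rw [hI1]; ring
  calc -(∫ x in s, q x * Real.log (q x)) - (1/2) * ∫ x in s, q x * Real.log x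
      ≤ c := hle
    _ = _ := hrhs.symm
end
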